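/- Let μ and ν be probability measures on a measurable space, and for each N ∈ ℕ let F_N be a σ-algebra such that ν|_{F_N} is absolutely continuous with respect to μ|_{F_N} with density Q_N. If E_μ[Q_N^{1/2}] → 0 as N → ∞, then ν is singular with respect to μ (on σ(∪_N F_N), assuming F_N increase to the full σ-algebra). -/

import Mathlib

/-!
Since `min 1 Q ≤ √Q`, the set `A = {1 ≤ Q_N}` satisfies
`μ A + ν Aᶜ = ∫_A 1 dμ + ∫_{Aᶜ} Q_N dμ ≤ E_μ[Q_N^{1/2}]`, so the Hellinger hypothesis yields
measurable sets of arbitrarily small `μ`-measure whose complements have arbitrarily small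
`ν`-measure. Taking such sets `A_n` with summable sizes, Borel–Cantelli gives
`μ (limsup A_n) = 0` and `ν (limsup A_nᶜ) = 0`, and `(limsup A_n)ᶜ = liminf A_nᶜ ⊆ limsup A_nᶜ`.
-/

open MeasureTheory Filter Topology Real
open scoped ENNReal

namespace MeasureTheory

variable {Ω : Type*} {m0 : MeasurableSpace Ω} {μ ν : Measure Ω}

theorem Measure.mutuallySingular_of_forall_exists_measure_le
    (h : ∀ ε : ℝ≥0∞, 0 < ε → ∃ s, MeasurableSet s ∧ μ s ≤ ε ∧ ν sᶜ ≤ ε) : μ ⟂ₘ ν := by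
  obtain ⟨δ, hδ_pos, hδ_sum⟩ := ENNReal.exists_pos_sum_of_countable' one_ne_zero ℕ
  have hδ_ne_top : ∑' n, δ n ≠ ∞ := (hδ_sum.trans ENNReal.one_lt_top).ne
  choose s hs hμs hνs using fun n => h (δ n) (hδ_pos n)
  refine ⟨limsup s atTop, MeasurableSet.measurableSet_limsup hs, ?_, ?_⟩
  · exact measure_limsup_atTop_eq_zero (ne_top_of_le_ne_top hδ_ne_top (ENNReal.tsum_le_tsum hμs))
  · have hν_limsup : ν (limsup (compl ∘ s) atTop) = 0 :=
      measure_limsup_atTop_eq_zero (ne_top_of_le_ne_top hδ_ne_top (ENNReal.tsum_le_tsum hνs))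
    rw [limsup_compl]
    exact measure_mono_null liminf_le_limsup hν_limsup

variable {Q : Ω → ℝ}

theorem Integrable.sqrt_of_nonneg [IsFiniteMeasure μ] (hQ : Integrable Q μ) (hQ_nonneg : 0 ≤ Q) :
    Integrable (fun ω => √(Q ω)) μ := by
  refine ((integrable_const 1).add hQ).mono'
    (continuous_sqrt.comp_aestronglyMeasurable hQ.aestronglyMeasurable) (ae_of_all _ fun ω => ?_)
  have hsq := sq_sqrt (hQ_nonneg ω)
  rw [norm_of_nonneg (sqrt_nonneg _), Pi.add_apply]
  nlinarith [sqrt_nonneg (Q ω)]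

theorem measure_setOf_one_le_le_integral_sqrt (hQ : Integrable (fun ω => √(Q ω)) μ) :
    μ {ω | 1 ≤ Q ω} ≤ ENNReal.ofReal (∫ ω, √(Q ω) ∂μ) := by
  have hMarkov := mul_meas_ge_le_lintegral₀ hQ.aemeasurable.ennreal_ofReal 1
  simp only [one_mul, ENNReal.one_le_ofReal, one_le_sqrt] at hMarkov
  rwa [ofReal_integral_eq_lintegral_ofReal hQ (ae_of_all _ fun ω => sqrt_nonneg _)]

theorem setIntegral_setOf_lt_one_le_integral_sqrt (hQ_meas : Measurable Q) (hQ : Integrable Q μ)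
    (hQ_sqrt : Integrable (fun ω => √(Q ω)) μ) (hQ_nonneg : 0 ≤ Q) :
    ∫ ω in {ω | Q ω < 1}, Q ω ∂μ ≤ ∫ ω, √(Q ω) ∂μ :=
  calc ∫ ω in {ω | Q ω < 1}, Q ω ∂μ ≤ ∫ ω in {ω | Q ω < 1}, √(Q ω) ∂μ := by
        refine setIntegral_mono_on hQ.integrableOn hQ_sqrt.integrableOn
          (measurableSet_lt hQ_meas measurable_const) fun ω (hω : Q ω < 1) => ?_
        rw [le_sqrt (hQ_nonneg ω) (hQ_nonneg ω)]
        nlinarith [mul_nonneg (hQ_nonneg ω) (sub_nonneg.2 hω.le)]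
    _ ≤ ∫ ω, √(Q ω) ∂μ := setIntegral_le_integral hQ_sqrt (ae_of_all _ fun ω => sqrt_nonneg _)

end MeasureTheory

theorem hellinger_vanishing_implies_singular_general
    {Ω : Type*} {m0 : MeasurableSpace Ω} (μ ν : Measure Ω)
    [IsProbabilityMeasure μ]
    (F : ℕ → MeasurableSpace Ω)
    (hFle : ∀ N, F N ≤ m0)
    (Q : ℕ → Ω → ℝ)
    (hQmeas : ∀ N, StronglyMeasurable[F N] (Q N))
    (hQpos : ∀ N, ∀ ω, 0 ≤ Q N ω)
    (hQint : ∀ N, Integrable (Q N) μ)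
    (hdensity : ∀ N, ∀ s : Set Ω, MeasurableSet[F N] s →
      ν s = ENNReal.ofReal (∫ ω in s, Q N ω ∂μ))
    (hHellinger : Tendsto (fun N => ∫ ω, Real.sqrt (Q N ω) ∂μ) atTop (𝓝 0)) :
    ν ⟂ₘ μ := by
  refine (Measure.mutuallySingular_of_forall_exists_measure_le fun ε hε => ?_).symm
  have hQ_sqrt N : Integrable (fun ω => √(Q N ω)) μ := (hQint N).sqrt_of_nonneg (hQpos N)
  obtain ⟨N, hN⟩ : ∃ N, ENNReal.ofReal (∫ ω, √(Q N ω) ∂μ) ≤ ε := by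
    have := ENNReal.tendsto_ofReal hHellinger
    rw [ENNReal.ofReal_zero] at this
    exact (this.eventually (Iic_mem_nhds hε)).exists
  have hlarge : MeasurableSet[F N] {ω | 1 ≤ Q N ω} :=
    measurableSet_le measurable_const (hQmeas N).measurable
  refine ⟨{ω | 1 ≤ Q N ω}, hFle N _ hlarge, ?_, ?_⟩
  · exact (measure_setOf_one_le_le_integral_sqrt (hQ_sqrt N)).trans hN
  · rw [hdensity N _ hlarge.compl, Set.compl_ofPred]
    simp only [not_le]
    refine le_trans (ENNReal.ofReal_le_ofReal ?_) hN
    exact setIntegral_setOf_lt_one_le_integral_sqrt ((hQmeas N).measurable.mono (hFle N) le_rfl)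
      (hQint N) (hQ_sqrt N) (hQpos N)

/-- (Kakutani-type singularity criterion.) Let `μ`, `ν` be probability
measures on a measurable space and `(F_N)` an increasing sequence of σ-algebras generating the
full σ-algebra. Suppose for each `N` the restriction of `ν` to `F_N` is absolutely continuous
with respect to that of `μ` with density `Q_N` (an `F_N`-measurable nonnegative function with
`ν(s) = ∫_s Q_N dμ` for every `F_N`-measurable `s`). If `E_μ[Q_N^{1/2}] → 0` as `N → ∞`,
then `ν` is singular with respect to `μ`. -/
theorem hellinger_vanishing_implies_singular
    {Ω : Type*} {m0 : MeasurableSpace Ω} (μ ν : Measure Ω)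
    [IsProbabilityMeasure μ] [IsProbabilityMeasure ν]
    (F : ℕ → MeasurableSpace Ω)
    (hFle : ∀ N, F N ≤ m0) (hFmono : Monotone F)
    (hFgen : (⨆ N, F N) = m0)
    (Q : ℕ → Ω → ℝ)
    (hQmeas : ∀ N, StronglyMeasurable[F N] (Q N))
    (hQpos : ∀ N, ∀ ω, 0 ≤ Q N ω)
    (hQint : ∀ N, Integrable (Q N) μ)
    (hdensity : ∀ N, ∀ s : Set Ω, MeasurableSet[F N] s →
      ν s = ENNReal.ofReal (∫ ω in s, Q N ω ∂μ))
    (hHellinger : Tendsto (fun N => ∫ ω, Real.sqrt (Q N ω) ∂μ) atTop (𝓝 0)) :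
    ν ⟂ₘ μ :=
  hellinger_vanishing_implies_singular_general μ ν F hFle Q hQmeas hQpos hQint hdensity hHellinger
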